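/- A Hall partition is unique up to renumbering: if (W_1,…,W_m) and (W'_1,…,W'_{m'}) are Hall partitions of F, then m = m' and there is a permutation i_1,…,i_m of 1,…,m with W'_j = W_{i_j} for all j. -/
import Mathlib


open Finset
open scoped Classical

variable {α β : Type*}

section Defs
variable [DecidableEq α] [DecidableEq β]

/-- Image of a set under a set-valued mapping. -/
def im (F : α → Finset β) (W : Finset α) : Finset β := W.biUnion F

/-- Complement mapping `F_W : x ↦ F(x) \\ F(W)`. -/
def cmap (F : α → Finset β) (W : Finset α) : α → Finset β := fun x => F x \ im F W

/-- Hall condition of a set-valued mapping on a domain `D`. -/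
def HallOn (F : α → Finset β) (D : Finset α) : Prop := ∀ W ⊆ D, W.card ≤ (im F W).card

/-- A critical set: nonempty with `♯F(W) = ♯W`. -/
def Critical (F : α → Finset β) (W : Finset α) : Prop := W.Nonempty ∧ (im F W).card = W.card

/-- A non-reducible set: nonempty with no proper critical subset. -/
def NonReducible (F : α → Finset β) (W : Finset α) : Prop :=
  W.Nonempty ∧ ∀ V, V ⊂ W → ¬ Critical F V

/-- Union of the first `i` parts: `⋃_{j<i} W_j`. -/
def pre {m : ℕ} (W : Fin m → Finset α) (i : Fin m) : Finset α :=
  (Finset.univ.filter (fun j => j.val < i.val)).biUnion W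

/-- Hall partition of `F` on the whole domain. -/
def IsHallPartition [Fintype α] (F : α → Finset β) {m : ℕ} (W : Fin m → Finset α) : Prop :=
  (∀ i j, i ≠ j → Disjoint (W i) (W j)) ∧
  (Finset.univ.biUnion W = Finset.univ) ∧
  (∀ i, ∀ x ∈ W i, (cmap F (pre W i) x).Nonempty) ∧
  (∀ i, NonReducible (cmap F (pre W i)) (W i)) ∧
  (∀ i : Fin m, i.val < m - 1 → Critical (cmap F (pre W i)) (W i))

/-- The alldifferent kernel `F^*`. -/
noncomputable def kernel [Fintype α] (F : α → Finset β) : α → Finset β :=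
  fun x => (F x).filter (fun y => ∃ s : α → β, Function.Injective s ∧ (∀ z, s z ∈ F z) ∧ s x = y)

end Defs


section Aux
variable [DecidableEq α] [DecidableEq β]

set_option linter.unusedSectionVars false in
lemma im_mono (F : α → Finset β) {A B : Finset α} (h : A ⊆ B) : im F A ⊆ im F B :=
  biUnion_subset_biUnion_of_subset_left _ h

set_option linter.unusedSectionVars false

lemma im_union (F : α → Finset β) (A B : Finset α) : im F (A ∪ B) = im F A ∪ im F B := by
  ext y
  simp only [im, mem_biUnion, mem_union]
  constructor
  · rintro ⟨x, hx | hx, hy⟩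
    · exact Or.inl ⟨x, hx, hy⟩
    · exact Or.inr ⟨x, hx, hy⟩
  · rintro (⟨x, hx, hy⟩ | ⟨x, hx, hy⟩)
    · exact ⟨x, Or.inl hx, hy⟩
    · exact ⟨x, Or.inr hx, hy⟩

lemma im_cmap (F : α → Finset β) (A S : Finset α) :
    im (cmap F A) S = im F S \ im F A := by
  ext y; simp only [im, cmap, mem_biUnion, mem_sdiff]; tauto

lemma im_union_cmap (F : α → Finset β) (A S : Finset α) :
    im F (A ∪ S) = im F A ∪ im (cmap F A) S := by
  rw [im_union, im_cmap, union_sdiff_self_eq_union]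

lemma card_im_union_cmap (F : α → Finset β) (A S : Finset α) :
    (im F (A ∪ S)).card = (im F A).card + (im (cmap F A) S).card := by
  rw [im_union_cmap, card_union_of_disjoint (by rw [im_cmap]; exact disjoint_sdiff)]

def Tight (F : α → Finset β) (T : Finset α) : Prop := (im F T).card = T.card

lemma tight_empty (F : α → Finset β) : Tight F (∅ : Finset α) := by simp [Tight, im]

lemma hallOn_of_nonReducible {G : α → Finset β} {D : Finset α}
    (hne : ∀ x ∈ D, (G x).Nonempty) (hnr : ∀ V, V ⊂ D → ¬ Critical G V) :
    HallOn G D := by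
  intro V
  induction V using Finset.strongInduction with
  | _ V ih =>
    intro hVD
    by_contra hlt
    push_neg at hlt
    have hpos : 0 < V.card := Nat.lt_of_le_of_lt (Nat.zero_le _) hlt
    obtain ⟨x, hx⟩ := card_pos.mp hpos
    have hss : V.erase x ⊂ V := erase_ssubset hx
    have h1 : (V.erase x).card ≤ (im G (V.erase x)).card :=
      ih _ hss (hss.subset.trans hVD)
    have h2 : (im G (V.erase x)).card ≤ (im G V).card :=
      card_le_card (im_mono G (erase_subset x V))
    have hcard : (V.erase x).card = V.card - 1 := card_erase_of_mem hx
    rcases (V.erase x).eq_empty_or_nonempty with he | hne'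
    · have hVx : V = {x} := by
        apply Subset.antisymm
        · intro a ha
          by_contra hax
          have : a ∈ V.erase x := mem_erase.mpr ⟨by simpa using hax, ha⟩
          simp [he] at this
        · simpa using hx
      have : (G x).Nonempty := hne x (hVD hx)
      have him : im G V = G x := by rw [hVx]; simp [im]
      rw [hVx, show im G {x} = G x by simp [im]] at hlt
      simp at hlt
      exact absurd hlt (by simpa using this.card_pos.ne')
    · have hcrit : Critical G (V.erase x) := ⟨hne', by omega⟩
      exact hnr _ (Finset.ssubset_of_ssubset_of_subset hss hVD) hcrit

def preN {m : ℕ} (W : Fin m → Finset α) (n : ℕ) : Finset α :=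
  (Finset.univ.filter (fun j : Fin m => j.val < n)).biUnion W

lemma pre_eq_preN {m : ℕ} (W : Fin m → Finset α) (i : Fin m) : pre W i = preN W i.val := rfl

lemma preN_zero {m : ℕ} (W : Fin m → Finset α) : preN W 0 = ∅ := by simp [preN]

lemma mem_preN {m : ℕ} {W : Fin m → Finset α} {x : α} {j : Fin m} (hx : x ∈ W j) {n : ℕ}
    (h : j.val < n) : x ∈ preN W n :=
  mem_biUnion.mpr ⟨j, mem_filter.mpr ⟨mem_univ _, h⟩, hx⟩

lemma preN_succ {m : ℕ} (W : Fin m → Finset α) {n : ℕ} (h : n < m) :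
    preN W (n + 1) = preN W n ∪ W ⟨n, h⟩ := by
  ext x
  simp only [preN, mem_biUnion, mem_filter, mem_univ, true_and, mem_union]
  constructor
  · rintro ⟨j, hj, hx⟩
    rcases Nat.lt_succ_iff_lt_or_eq.mp hj with hj' | hj'
    · exact Or.inl ⟨j, hj', hx⟩
    · refine Or.inr ?_
      have : j = ⟨n, h⟩ := Fin.ext hj'
      rwa [← this]
  · rintro (⟨j, hj, hx⟩ | hx)
    · exact ⟨j, Nat.lt_succ_of_lt hj, hx⟩
    · exact ⟨⟨n, h⟩, Nat.lt_succ_self n, hx⟩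

lemma preN_of_le {m : ℕ} (W : Fin m → Finset α) {n : ℕ} (h : m ≤ n) :
    preN W n = Finset.univ.biUnion W := by
  unfold preN
  rw [Finset.filter_true_of_mem (fun j _ => lt_of_lt_of_le j.isLt h)]

lemma disjoint_preN {m : ℕ} {W : Fin m → Finset α}
    (hd : ∀ i j, i ≠ j → Disjoint (W i) (W j)) {n : ℕ} {i : Fin m} (h : n ≤ i.val) :
    Disjoint (preN W n) (W i) := by
  unfold preN
  rw [Finset.disjoint_biUnion_left]
  intro j hj
  exact hd j i (fun he => absurd ((mem_filter.mp hj).2) (by rw [he]; omega))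

lemma hallOn_univ_of_partition [Fintype α] {m : ℕ} {F : α → Finset β} {W : Fin m → Finset α}
    (h : IsHallPartition F W) : HallOn F Finset.univ := by
  obtain ⟨hd, hcov, hne, hnr, hcrit⟩ := h
  have key : ∀ n, ∀ S ⊆ preN W n, S.card ≤ (im F S).card := by
    intro n
    induction n with
    | zero =>
      intro S hS
      rw [preN_zero] at hS
      rw [subset_empty.mp hS]
      simp [im]
    | succ n ih =>
      by_cases hn : n < m
      · intro S hS
        rw [preN_succ W hn] at hS
        set S₁ := S ∩ preN W n with hS₁def
        set S₂ := S \ preN W n with hS₂def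
        have hS₂sub : S₂ ⊆ W ⟨n, hn⟩ := by
          intro x hx
          obtain ⟨hxS, hxU⟩ := mem_sdiff.mp hx
          rcases mem_union.mp (hS hxS) with h' | h'
          · exact absurd h' hxU
          · exact h'
        have hcardS : S₁.card + S₂.card = S.card := card_inter_add_card_sdiff S (preN W n)
        have hhall : HallOn (cmap F (preN W n)) (W ⟨n, hn⟩) :=
          hallOn_of_nonReducible (hne ⟨n, hn⟩) ((hnr ⟨n, hn⟩).2)
        have h2 : S₂.card ≤ (im (cmap F (preN W n)) S₂).card := hhall S₂ hS₂sub
        have h1 : S₁.card ≤ (im F S₁).card := ih S₁ inter_subset_right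
        have hsubs : im F S₁ ∪ im (cmap F (preN W n)) S₂ ⊆ im F S := by
          apply union_subset (im_mono _ inter_subset_left)
          rw [im_cmap]
          exact (sdiff_subset).trans (im_mono _ sdiff_subset)
        have hdisj : Disjoint (im F S₁) (im (cmap F (preN W n)) S₂) := by
          rw [im_cmap]
          exact Finset.disjoint_sdiff.mono_left (im_mono F inter_subset_right)
        calc S.card = S₁.card + S₂.card := hcardS.symm
          _ ≤ (im F S₁).card + (im (cmap F (preN W n)) S₂).card := Nat.add_le_add h1 h2
          _ = (im F S₁ ∪ im (cmap F (preN W n)) S₂).card := (card_union_of_disjoint hdisj).symm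
          _ ≤ (im F S).card := card_le_card hsubs
      · intro S hS
        apply ih
        rwa [preN_of_le W (le_of_not_gt hn), ← preN_of_le W (le_trans (le_of_not_gt hn) (Nat.le_succ n))]
  intro V hV
  exact key m V (by rwa [preN_of_le W le_rfl, hcov])

lemma tight_union_inter [Fintype α] {F : α → Finset β} (hH : HallOn F Finset.univ)
    {A B : Finset α} (hA : Tight F A) (hB : Tight F B) :
    Tight F (A ∪ B) ∧ Tight F (A ∩ B) := by
  have h1 : (A ∪ B).card ≤ (im F (A ∪ B)).card := hH _ (subset_univ _)
  have h2 : (A ∩ B).card ≤ (im F (A ∩ B)).card := hH _ (subset_univ _)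
  have h3 : (im F A ∪ im F B).card + (im F A ∩ im F B).card = (im F A).card + (im F B).card :=
    card_union_add_card_inter _ _
  have h4 : (im F (A ∩ B)).card ≤ (im F A ∩ im F B).card :=
    card_le_card (subset_inter (im_mono F inter_subset_left) (im_mono F inter_subset_right))
  have h5 : (A ∪ B).card + (A ∩ B).card = A.card + B.card := card_union_add_card_inter A B
  have h6 : im F (A ∪ B) = im F A ∪ im F B := im_union F A B
  have h7 : (im F (A ∪ B)).card = (im F A ∪ im F B).card := by rw [h6]
  unfold Tight at *
  constructor <;> omega

lemma tight_preN [Fintype α] {m : ℕ} {F : α → Finset β} {W : Fin m → Finset α}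
    (h : IsHallPartition F W) : ∀ n, n < m → Tight F (preN W n) := by
  obtain ⟨hd, hcov, hne, hnr, hcrit⟩ := h
  intro n
  induction n with
  | zero => intro _; rw [preN_zero]; exact tight_empty F
  | succ n ih =>
    intro hn1
    have hn : n < m := Nat.lt_of_succ_lt hn1
    have hprev : Tight F (preN W n) := ih hn
    have hc : Critical (cmap F (pre W ⟨n, hn⟩)) (W ⟨n, hn⟩) := hcrit ⟨n, hn⟩ (by simp; omega)
    have hc2 : (im (cmap F (preN W n)) (W ⟨n, hn⟩)).card = (W ⟨n, hn⟩).card := hc.2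
    unfold Tight
    have hdj : Disjoint (preN W n) (W ⟨n, hn⟩) := disjoint_preN hd le_rfl
    rw [preN_succ W hn, card_im_union_cmap, hc2, card_union_of_disjoint hdj, hprev]

lemma tight_biUnion [Fintype α] {m : ℕ} {F : α → Finset β} {W : Fin m → Finset α}
    (h : IsHallPartition F W) (hH : HallOn F Finset.univ) :
    ∀ T : Finset α, Tight F T → ∃ S : Finset (Fin m), T = S.biUnion W := by
  intro T
  induction T using Finset.strongInduction with
  | _ T ih =>
    intro hT
    rcases T.eq_empty_or_nonempty with rfl | hTne
    · exact ⟨∅, by simp⟩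
    · set I := Finset.univ.filter (fun j : Fin m => (T ∩ W j).Nonempty) with hIdef
      have hIne : I.Nonempty := by
        obtain ⟨x, hx⟩ := hTne
        have hx2 : x ∈ Finset.univ.biUnion W := by rw [h.2.1]; exact mem_univ x
        obtain ⟨j, _, hj⟩ := mem_biUnion.mp hx2
        exact ⟨j, mem_filter.mpr ⟨mem_univ _, ⟨x, mem_inter.mpr ⟨hx, hj⟩⟩⟩⟩
      set i := I.max' hIne with hidef
      have hTsub : T ⊆ preN W (i.val + 1) := by
        intro x hx
        have hx2 : x ∈ Finset.univ.biUnion W := by rw [h.2.1]; exact mem_univ x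
        obtain ⟨j, _, hj⟩ := mem_biUnion.mp hx2
        have hjI : j ∈ I := mem_filter.mpr ⟨mem_univ _, ⟨x, mem_inter.mpr ⟨hx, hj⟩⟩⟩
        have hji : j ≤ i := I.le_max' j hjI
        exact mem_preN hj (Nat.lt_succ_of_le hji)
      have hUt : Tight F (preN W i.val) := tight_preN h i.val i.isLt
      have hTUt : Tight F (T ∪ preN W i.val) := (tight_union_inter hH hT hUt).1
      set S₀ := T \ preN W i.val with hS₀def
      have hWdisj : Disjoint (preN W i.val) (W i) := by
        have := disjoint_preN h.1 (n := i.val) (i := i) le_rfl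
        exact this
      have hS₀W : S₀ ⊆ W i := by
        intro x hx
        obtain ⟨hxT, hxU⟩ := mem_sdiff.mp hx
        have hx2 := hTsub hxT
        rw [preN_succ W i.isLt] at hx2
        rcases mem_union.mp hx2 with h' | h'
        · exact absurd h' hxU
        · simpa using h'
      have hS₀ne : S₀.Nonempty := by
        have hiI : i ∈ I := I.max'_mem hIne
        obtain ⟨x, hx⟩ := (mem_filter.mp hiI).2
        obtain ⟨hxT, hxW⟩ := mem_inter.mp hx
        exact ⟨x, mem_sdiff.mpr ⟨hxT, fun hc => disjoint_left.mp hWdisj hc hxW⟩⟩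
      have hunion : T ∪ preN W i.val = preN W i.val ∪ S₀ := by
        ext x
        simp only [hS₀def, mem_union, mem_sdiff]
        tauto
      have hcritS : Critical (cmap F (preN W i.val)) S₀ := by
        refine ⟨hS₀ne, ?_⟩
        have e1 := card_im_union_cmap F (preN W i.val) S₀
        have e2 : (preN W i.val ∪ S₀).card = (preN W i.val).card + S₀.card :=
          card_union_of_disjoint (Finset.disjoint_sdiff)
        have e3 : Tight F (preN W i.val ∪ S₀) := hunion ▸ hTUt
        unfold Tight at e3 hUt
        omega
      have hS₀eq : S₀ = W i := by
        by_contra hne'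
        exact (h.2.2.2.1 i).2 S₀ (lt_of_le_of_ne hS₀W hne') hcritS
      have hWT : W i ⊆ T := hS₀eq ▸ sdiff_subset
      set T' := T ∩ preN W i.val with hT'def
      have hT'T : T' ⊂ T := by
        refine Finset.ssubset_iff_of_subset inter_subset_left |>.mpr ?_
        obtain ⟨x, hx⟩ := hS₀ne
        obtain ⟨hxT, hxU⟩ := mem_sdiff.mp hx
        exact ⟨x, hxT, fun hc => hxU (mem_inter.mp hc).2⟩
      have hT't : Tight F T' := (tight_union_inter hH hT hUt).2
      obtain ⟨S', hS'⟩ := ih T' hT'T hT't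
      refine ⟨insert i S', ?_⟩
      rw [biUnion_insert, ← hS']
      ext x
      simp only [hT'def, mem_union, mem_inter]
      constructor
      · intro hx
        have hx2 := hTsub hx
        rw [preN_succ W i.isLt] at hx2
        rcases mem_union.mp hx2 with h' | h'
        · exact Or.inr ⟨hx, h'⟩
        · exact Or.inl (by simpa using h')
      · rintro (hx | ⟨hx, _⟩)
        · exact hWT hx
        · exact hx

lemma biUnion_sdiff_parts {m : ℕ} {W : Fin m → Finset α}
    (hd : ∀ i j, i ≠ j → Disjoint (W i) (W j)) (S_A S_B : Finset (Fin m)) :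
    S_A.biUnion W \ S_B.biUnion W = (S_A \ S_B).biUnion W := by
  ext x
  simp only [mem_sdiff, mem_biUnion]
  constructor
  · rintro ⟨⟨k, hk, hxk⟩, hnb⟩
    exact ⟨k, ⟨hk, fun hkB => hnb ⟨k, hkB, hxk⟩⟩, hxk⟩
  · rintro ⟨k, ⟨hkA, hkB⟩, hxk⟩
    refine ⟨⟨k, hkA, hxk⟩, ?_⟩
    rintro ⟨k', hk', hxk'⟩
    have hkk : k = k' := by
      by_contra hne
      exact disjoint_left.mp (hd k k' hne) hxk hxk'
    exact hkB (hkk ▸ hk')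

lemma part_biUnion [Fintype α] {m m' : ℕ} {F : α → Finset β}
    {W : Fin m → Finset α} {W' : Fin m' → Finset α}
    (h1 : IsHallPartition F W) (h2 : IsHallPartition F W') (j : Fin m') :
    ∃ S : Finset (Fin m), W' j = S.biUnion W := by
  have hH := hallOn_univ_of_partition h1
  have hB : Tight F (preN W' j.val) := tight_preN h2 j.val j.isLt
  obtain ⟨S_B, hSB⟩ := tight_biUnion h1 hH _ hB
  have hdj : Disjoint (preN W' j.val) (W' j) := disjoint_preN h2.1 le_rfl
  have hsucc : preN W' (j.val + 1) = preN W' j.val ∪ W' j := by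
    rw [preN_succ W' j.isLt]
  by_cases hj : j.val + 1 < m'
  · have hA : Tight F (preN W' (j.val + 1)) := tight_preN h2 _ hj
    obtain ⟨S_A, hSA⟩ := tight_biUnion h1 hH _ hA
    have hW'j : W' j = preN W' (j.val + 1) \ preN W' j.val := by
      rw [hsucc, union_sdiff_cancel_left hdj]
    refine ⟨S_A \ S_B, ?_⟩
    rw [hW'j, hSA, hSB, biUnion_sdiff_parts h1.1]
  · have hm' : j.val + 1 = m' := by have := j.isLt; omega
    have huniv : preN W' (j.val + 1) = Finset.univ := by
      rw [hm', preN_of_le W' le_rfl, h2.2.1]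
    have hW'j : W' j = Finset.univ \ preN W' j.val := by
      rw [← huniv, hsucc, union_sdiff_cancel_left hdj]
    have hU : (Finset.univ : Finset α) = (Finset.univ : Finset (Fin m)).biUnion W := h1.2.1.symm
    refine ⟨Finset.univ \ S_B, ?_⟩
    rw [hW'j, hU, hSB, biUnion_sdiff_parts h1.1]

lemma part_eq [Fintype α] {m m' : ℕ} {F : α → Finset β}
    {W : Fin m → Finset α} {W' : Fin m' → Finset α}
    (h1 : IsHallPartition F W) (h2 : IsHallPartition F W') (j : Fin m') :
    ∃ i : Fin m, W' j = W i := by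
  obtain ⟨S, hS⟩ := part_biUnion h1 h2 j
  have hW'ne : (W' j).Nonempty := (h2.2.2.2.1 j).1
  have hSne : S.Nonempty := by
    obtain ⟨x, hx⟩ := hW'ne
    rw [hS] at hx
    obtain ⟨k, hk, _⟩ := mem_biUnion.mp hx
    exact ⟨k, hk⟩
  obtain ⟨i, hiS⟩ := hSne
  obtain ⟨S', hS'⟩ := part_biUnion h2 h1 i
  have hWine : (W i).Nonempty := (h1.2.2.2.1 i).1
  have hWisub : W i ⊆ W' j := by rw [hS]; exact subset_biUnion_of_mem W hiS
  have hall : ∀ j' ∈ S', j' = j := by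
    intro j' hj'
    have hsub : W' j' ⊆ W i := by rw [hS']; exact subset_biUnion_of_mem W' hj'
    have hne' : (W' j').Nonempty := (h2.2.2.2.1 j').1
    by_contra hne''
    obtain ⟨x, hx⟩ := hne'
    exact disjoint_left.mp (h2.1 j' j hne'') hx (hWisub (hsub hx))
  have hS'ne : S'.Nonempty := by
    obtain ⟨x, hx⟩ := hWine
    rw [hS'] at hx
    obtain ⟨k, hk, _⟩ := mem_biUnion.mp hx
    exact ⟨k, hk⟩
  have hSj : S' = {j} := by
    obtain ⟨j₀, hj₀⟩ := hS'ne
    have hj₀j : j₀ = j := hall j₀ hj₀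
    exact Finset.eq_singleton_iff_unique_mem.mpr ⟨hj₀j ▸ hj₀, hall⟩
  exact ⟨i, by rw [hS', hSj, singleton_biUnion]⟩

end Aux

theorem stmt18 [Fintype α] [Nonempty α] [DecidableEq α] [Fintype β] [Nonempty β] [DecidableEq β]
    (F : α → Finset β) {m m' : ℕ} (W : Fin m → Finset α) (W' : Fin m' → Finset α)
    (h1 : IsHallPartition F W) (h2 : IsHallPartition F W') :
    m = m' ∧ ∃ e : Fin m' ≃ Fin m, ∀ j, W' j = W (e j) := by
  choose f hf using part_eq h1 h2
  choose g hg using part_eq h2 h1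
  have finj : Function.Injective f := by
    intro j₁ j₂ he
    by_contra hne
    have heq : W' j₁ = W' j₂ := by rw [hf j₁, hf j₂, he]
    obtain ⟨x, hx⟩ := (h2.2.2.2.1 j₁).1
    exact disjoint_left.mp (h2.1 j₁ j₂ hne) hx (heq ▸ hx)
  have ginj : Function.Injective g := by
    intro i₁ i₂ he
    by_contra hne
    have heq : W i₁ = W i₂ := by rw [hg i₁, hg i₂, he]
    obtain ⟨x, hx⟩ := (h1.2.2.2.1 i₁).1
    exact disjoint_left.mp (h1.1 i₁ i₂ hne) hx (heq ▸ hx)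
  have hle1 : m' ≤ m := by simpa using Fintype.card_le_of_injective f finj
  have hle2 : m ≤ m' := by simpa using Fintype.card_le_of_injective g ginj
  have hm : m = m' := le_antisymm hle2 hle1
  refine ⟨hm, ?_⟩
  have hbij : Function.Bijective f :=
    (Fintype.bijective_iff_injective_and_card f).mpr ⟨finj, by simp [hm]⟩
  exact ⟨Equiv.ofBijective f hbij, fun j => by rw [Equiv.ofBijective_apply]; exact hf j⟩
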